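/- arXiv:2203.16984 — 2 statements merged into one kernel-verified Lean document; each statement's English description precedes it below -/
import Mathlib

section
/- Let C be a category with amalgamation whose homsets are finite. For all objects A, B, C of C and every morphism f ∈ hom(A, B), there exists an object D and a morphism w ∈ hom(C, D) such that w · hom(A, C) ⊆ hom(B, D) · f, i.e. for every g ∈ hom(A, C) there is an h ∈ hom(B, D) with w·g = h·f. -/
open CategoryTheory

universe v u

lemma stmt_4_aux {C : Type u} [Category.{v} C]
    (hamalg : ∀ {X Y Z : C} (f : X ⟶ Y) (g : X ⟶ Z),
      ∃ (W : C) (h : Y ⟶ W) (k : Z ⟶ W), f ≫ h = g ≫ k)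
    (A B D : C) (f : A ⟶ B) (L : List (A ⟶ D)) :
    ∃ (E : C) (w : D ⟶ E), ∀ g ∈ L, ∃ h : B ⟶ E, g ≫ w = f ≫ h := by
  induction L with
  | nil => exact ⟨D, 𝟙 D, by simp⟩
  | cons g L ih =>
    obtain ⟨E, w, hw⟩ := ih
    obtain ⟨W, h, k, hk⟩ := hamalg f (g ≫ w)
    refine ⟨W, w ≫ k, ?_⟩
    intro g' hg'
    rcases List.mem_cons.1 hg' with rfl | hg'
    · exact ⟨h, by rw [← Category.assoc, ← hk]⟩
    · obtain ⟨h', hh'⟩ := hw g' hg'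
      exact ⟨h' ≫ k, by rw [← Category.assoc, hh', Category.assoc]⟩

/-- in a category with amalgamation whose homsets are finite, for all
objects `A B D` and every `f : A ⟶ B` there are `E` and `w : D ⟶ E` with
`w · hom(A, D) ⊆ hom(B, E) · f`. -/
theorem stmt_4 {C : Type u} [Category.{v} C]
    [∀ X Y : C, Finite (X ⟶ Y)]
    (hamalg : ∀ {X Y Z : C} (f : X ⟶ Y) (g : X ⟶ Z),
      ∃ (W : C) (h : Y ⟶ W) (k : Z ⟶ W), f ≫ h = g ≫ k)
    (A B D : C) (f : A ⟶ B) :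
    ∃ (E : C) (w : D ⟶ E), ∀ g : A ⟶ D, ∃ h : B ⟶ E, g ≫ w = f ≫ h := by
  have : Fintype (A ⟶ D) := Fintype.ofFinite _
  obtain ⟨E, w, hw⟩ := stmt_4_aux hamalg A B D f (Finset.univ : Finset (A ⟶ D)).toList
  exact ⟨E, w, fun g => hw g (by simp)⟩
end

section
/- Let C be a category with amalgamation whose morphisms are mono and whose homsets are finite. Then for all objects A₁, A₂ of C, if there is a morphism A₁ → A₂ then the embedding Ramsey degree of A₁ is at most the embedding Ramsey degree of A₂ (in ℕ ∪ {∞}). -/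
open CategoryTheory

universe v u

variable {C : Type u} [Category.{v} C]

def copySetoid (A B : C) : Setoid (A ⟶ B) where
  r f g := ∃ α : Aut A, f = α.hom ≫ g
  iseqv := by
    constructor
    · intro f; exact ⟨Iso.refl A, by simp⟩
    · rintro f g ⟨α, rfl⟩; exact ⟨α.symm, (Iso.inv_hom_id_assoc α g).symm⟩
    · rintro f g h ⟨α, rfl⟩ ⟨β, rfl⟩; exact ⟨α ≪≫ β, (Category.assoc _ _ _).symm⟩

def Copies (A B : C) := Quotient (copySetoid A B)

def lmul {A B D : C} (w : B ⟶ D) : Copies A B → Copies A D :=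
  Quotient.map' (fun f => f ≫ w) (by rintro f g ⟨α, rfl⟩; exact ⟨α, by simp⟩)

instance (A B : C) [Finite (A ⟶ B)] : Finite (Copies A B) := Quotient.finite _

def Coarser {X : Type*} (S P : Set (Set X)) : Prop := ∀ β ∈ P, ∃ γ ∈ S, β ⊆ γ

def pullPart {A B D : C} (w : B ⟶ D) (P : Set (Set (Copies A D))) : Set (Set (Copies A B)) :=
  {S | S ≠ ∅ ∧ ∃ γ ∈ P, S = lmul w ⁻¹' γ}

def partOfColoring {X : Type*} {k : ℕ} (χ : X → Fin k) : Set (Set X) :=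
  {S | S ≠ ∅ ∧ ∃ i, S = χ ⁻¹' {i}}

def Essential (A B : C) (Λ : Set (Set (Copies A B))) : Prop :=
  Setoid.IsPartition Λ ∧
    ∃ D : C, ∀ P : Set (Set (Copies A D)), Setoid.IsPartition P →
      ∃ w : B ⟶ D, Coarser Λ (pullPart w P)

def sArrow (A B D : C) (k t : ℕ) : Prop :=
  ∀ χ : Copies A D → Fin k, ∃ w : B ⟶ D, (χ '' Set.range (lmul w)).ncard ≤ t

noncomputable def sDeg (A : C) : ℕ∞ :=
  sInf {n : ℕ∞ | ∃ m : ℕ, 0 < m ∧ n = m ∧ ∀ (k : ℕ) (B : C), ∃ D, sArrow A B D k m}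

def eArrow (A B D : C) (k t : ℕ) : Prop :=
  ∀ χ : (A ⟶ D) → Fin k, ∃ w : B ⟶ D, (χ '' {h | ∃ f : A ⟶ B, h = f ≫ w}).ncard ≤ t

noncomputable def eDeg (A : C) : ℕ∞ :=
  sInf {n : ℕ∞ | ∃ m : ℕ, 0 < m ∧ n = m ∧ ∀ (k : ℕ) (B : C), ∃ D, eArrow A B D k m}

noncomputable def elog : ℕ∞ → EReal :=
  WithTop.recTopCoe ⊤ (fun m : ℕ => ((Real.logb 2 m : ℝ) : EReal))

/-- in a category with amalgamation, mono morphisms and finite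
homsets, `A₁ → A₂` implies `t(A₁) ≤ t(A₂)` for embedding Ramsey degrees. -/
theorem stmt_5 [∀ X Y : C, Finite (X ⟶ Y)]
    (hmono : ∀ {X Y : C} (f : X ⟶ Y), Mono f)
    (hamalg : ∀ {X Y Z : C} (f : X ⟶ Y) (g : X ⟶ Z),
      ∃ (W : C) (h : Y ⟶ W) (k : Z ⟶ W), f ≫ h = g ≫ k)
    (A₁ A₂ : C) (h : Nonempty (A₁ ⟶ A₂)) :
    eDeg A₁ ≤ eDeg A₂ := by
  obtain ⟨ι⟩ := h
  apply sInf_le_sInf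
  rintro n ⟨m, hm, rfl, hall⟩
  refine ⟨m, hm, rfl, ?_⟩
  intro k B
  have key : ∃ (B' : C) (e : B ⟶ B'), ∀ f : A₁ ⟶ B, ∃ g : A₂ ⟶ B', ι ≫ g = f ≫ e := by
    have list_key : ∀ L : List (A₁ ⟶ B), ∃ (B' : C) (e : B ⟶ B'),
        ∀ f ∈ L, ∃ g : A₂ ⟶ B', ι ≫ g = f ≫ e := by
      intro L
      induction L with
      | nil => exact ⟨B, 𝟙 B, by simp⟩
      | cons f L ih =>
        obtain ⟨B₀, e₀, h₀⟩ := ih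
        obtain ⟨W, hW, kW, hcomm⟩ := hamalg ι (f ≫ e₀)
        refine ⟨W, e₀ ≫ kW, ?_⟩
        intro f' hf'
        rcases List.mem_cons.mp hf' with rfl | hf'
        · exact ⟨hW, by rw [hcomm]; simp⟩
        · obtain ⟨g, hg⟩ := h₀ f' hf'
          exact ⟨g ≫ kW, by rw [← Category.assoc, hg, Category.assoc]⟩
    haveI := Fintype.ofFinite (A₁ ⟶ B)
    obtain ⟨B', e, hB'⟩ := list_key (Finset.univ.toList)
    exact ⟨B', e, fun f => hB' f (by simp [Finset.mem_toList])⟩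
  obtain ⟨B', e, hext⟩ := key
  obtain ⟨D, hD⟩ := hall k B'
  refine ⟨D, ?_⟩
  intro χ
  obtain ⟨w, hw⟩ := hD (fun g => χ (ι ≫ g))
  refine ⟨e ≫ w, ?_⟩
  refine le_trans (Set.ncard_le_ncard ?_ (Set.toFinite _)) hw
  rintro c ⟨hh, ⟨f, rfl⟩, rfl⟩
  obtain ⟨g, hg⟩ := hext f
  exact ⟨g ≫ w, ⟨g, rfl⟩, by simp only [← Category.assoc, hg]⟩
end
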